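/- The sum on the right-hand side of Theorem 3.1 is direct: if Σ_{p∈Ī₂∪J₃∪I₅} c_p ∂_{t_p} + d_μ + ad u = 0 as a linear operator on 𝒦, where c_p∈F, μ∈Hom*_ℤ(Γ,F), and u∈𝒦, then c_p=0 for all p, μ=0, and u=0. -/

import Mathlib

noncomputable section

/-- `ι_i = ℓ₁ + ⋯ + ℓ_i`. -/
def iot (ℓ : ℕ → ℕ) (i : ℕ) : ℕ := ∑ k ∈ Finset.Icc 1 i, ℓ k

/-- `I_{i,j} = {ι_{i-1}+1, …, ι_j}`. -/
def iSet (ℓ : ℕ → ℕ) (i j : ℕ) : Finset ℕ := Finset.Icc (iot ℓ (i - 1) + 1) (iot ℓ j)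

/-- The index-shift map `p ↦ p̄` (shift by `ι₆`). -/
def bar (ℓ : ℕ → ℕ) (p : ℕ) : ℕ := if p ≤ iot ℓ 6 then p + iot ℓ 6 else p - iot ℓ 6

/-- `K̄ = {p̄ : p ∈ K}`. -/
def barSet (ℓ : ℕ → ℕ) (K : Finset ℕ) : Finset ℕ := K.image (bar ℓ)

/-- `J_{i,j} = I_{i,j} ∪ Ī_{i,j}`. -/
def jSet (ℓ : ℕ → ℕ) (i j : ℕ) : Finset ℕ := iSet ℓ i j ∪ barSet ℓ (iSet ℓ i j)

/-- The semigroup `𝒥 = 𝒥₀ × 𝒥₁`, encoded as functions `ℕ → ℕ`; `j0 = true`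
means `𝒥₀ = ℕ` and `j0 = false` means `𝒥₀ = {0}`. -/
def jIdx (ℓ : ℕ → ℕ) (j0 : Bool) : Set (ℕ → ℕ) :=
  {i | (j0 = false → i 0 = 0) ∧
    ∀ p, 1 ≤ p →
      (p ∈ iSet ℓ 1 2 ∪ iSet ℓ 4 4 ∪ barSet ℓ (iSet ℓ 1 1) ∨ 2 * iot ℓ 6 < p) → i p = 0}

/-- `σ_p` (with `σ_p = σ_{p̄}`). -/
def sgm (F : Type*) [Field F] (ℓ : ℕ → ℕ) (p : ℕ) : ℕ → F :=
  let q := if p ≤ iot ℓ 6 then p else p - iot ℓ 6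
  if q ∈ iSet ℓ 1 3 then -Pi.single q (1 : F) - Pi.single (q + iot ℓ 6) (1 : F)
  else if q ∈ iSet ℓ 4 5 then -Pi.single q (1 : F)
  else 0

/-- The underlying space `𝒜`: the free `F`-module with basis `Γ × 𝒥`. -/
abbrev CA (F : Type*) [Field F] (ℓ : ℕ → ℕ) (Γ : AddSubgroup (ℕ → F)) (j0 : Bool) : Type _ :=
  (↥Γ × ↥(jIdx ℓ j0)) →₀ F

/-- The basis monomial `x^{α,i⃗}`, with the convention that it is `0` if `(α,i⃗) ∉ Γ × 𝒥`. -/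
def X (F : Type*) [Field F] (ℓ : ℕ → ℕ) (Γ : AddSubgroup (ℕ → F)) (j0 : Bool)
    (α : ℕ → F) (i : ℕ → ℕ) : CA F ℓ Γ j0 :=
  @dite _ (α ∈ Γ ∧ i ∈ jIdx ℓ j0) (Classical.dec _)
    (fun h => Finsupp.single (⟨α, h.1⟩, ⟨i, h.2⟩) 1) (fun _ => 0)

variable (F : Type*) [Field F] (ℓ : ℕ → ℕ) (Γ : AddSubgroup (ℕ → F)) (j0 : Bool)

/-- The commutative associative product on `𝒜`. -/
def mulA (u v : CA F ℓ Γ j0) : CA F ℓ Γ j0 :=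
  u.sum fun a ca => v.sum fun b cb =>
    (ca * cb) • X F ℓ Γ j0 (a.1.1 + b.1.1) (a.2.1 + b.2.1)

/-- The grading operator `∂*_p`. -/
def pstar (p : ℕ) (u : CA F ℓ Γ j0) : CA F ℓ Γ j0 :=
  u.sum fun a ca => (ca * a.1.1 p) • Finsupp.single a 1

/-- The down-grading operator `∂_{t_p}`. -/
def pt (p : ℕ) (u : CA F ℓ Γ j0) : CA F ℓ Γ j0 :=
  u.sum fun a ca => (ca * (a.2.1 p : F)) • X F ℓ Γ j0 a.1.1 (a.2.1 - Pi.single p 1)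

/-- `∂_p = ∂*_p + ∂_{t_p}`. -/
def dd (p : ℕ) (u : CA F ℓ Γ j0) : CA F ℓ Γ j0 := pstar F ℓ Γ j0 p u + pt F ℓ Γ j0 p u

/-- `∂ = Σ_{p∈J_{1,3}∪I_{4,5}} ∂*_p + Σ_{p∈I₆∪Ī_{4,6}} t_p ∂_{t_p}`. -/
def Dop (u : CA F ℓ Γ j0) : CA F ℓ Γ j0 :=
  (∑ p ∈ jSet ℓ 1 3 ∪ iSet ℓ 4 5, pstar F ℓ Γ j0 p u) +
    ∑ p ∈ iSet ℓ 6 6 ∪ barSet ℓ (iSet ℓ 4 6),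
      mulA F ℓ Γ j0 (X F ℓ Γ j0 0 (Pi.single p 1)) (pt F ℓ Γ j0 p u)

/-- The contact bracket (2.18):
`[u,v] = Σ_{p∈I} x^{σ_p}(∂_p u·∂_{p̄} v − ∂_{p̄} u·∂_p v) + (2−∂)(u)·∂₀(v) − ∂₀(u)·(2−∂)(v)`. -/
def brk (u v : CA F ℓ Γ j0) : CA F ℓ Γ j0 :=
  (∑ p ∈ iSet ℓ 1 6,
      mulA F ℓ Γ j0 (X F ℓ Γ j0 (sgm F ℓ p) 0)
        (mulA F ℓ Γ j0 (dd F ℓ Γ j0 p u) (dd F ℓ Γ j0 (bar ℓ p) v) -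
          mulA F ℓ Γ j0 (dd F ℓ Γ j0 (bar ℓ p) u) (dd F ℓ Γ j0 p v))) +
    mulA F ℓ Γ j0 ((2 : F) • u - Dop F ℓ Γ j0 u) (dd F ℓ Γ j0 0 v) -
    mulA F ℓ Γ j0 (dd F ℓ Γ j0 0 u) ((2 : F) • v - Dop F ℓ Γ j0 v)


/-- For a function `μ : Γ → F`, the diagonal linear map `d_μ : x^{α,i⃗} ↦ μ(α)x^{α,i⃗}`. -/
def dmu (μ : ↥Γ → F) (u : CA F ℓ Γ j0) : CA F ℓ Γ j0 :=
  u.sum fun a ca => (ca * μ a.1) • Finsupp.single a 1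

/-- Evaluation of the `p`-th coordinate, as an additive homomorphism `Γ →+ F`. -/
def coordHom (F : Type*) [Field F] (Γ : AddSubgroup (ℕ → F)) (p : ℕ) : ↥Γ →+ F :=
  (Pi.evalAddMonoidHom (fun _ : ℕ => F) p).comp Γ.subtype

/-- `Hom'_ℤ(Γ,F)`: additive homomorphisms `μ : Γ → F` with `μ(σ_p) = 0` for `p ∈ I_{1,5}`. -/
def homPrime (F : Type*) [Field F] (ℓ : ℕ → ℕ) (Γ : AddSubgroup (ℕ → F)) :
    Submodule F (↥Γ →+ F) where
  carrier := {μ | ∀ p ∈ iSet ℓ 1 5, ∀ h : sgm F ℓ p ∈ Γ, μ ⟨sgm F ℓ p, h⟩ = 0}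
  add_mem' := by
    intro a b ha hb p hp h
    simp [ha p hp h, hb p hp h]
  zero_mem' := by intro p hp h; simp
  smul_mem' := by
    intro c a ha p hp h
    simp [ha p hp h]

/-- `μ_p(α) = α_{p̄} − α_p` for `p ∈ I_{1,3}`. -/
def muP (F : Type*) [Field F] (ℓ : ℕ → ℕ) (Γ : AddSubgroup (ℕ → F)) (p : ℕ) : ↥Γ →+ F :=
  coordHom F Γ (bar ℓ p) - coordHom F Γ p

/-- `μ₀`: equal to `α ↦ α₀` if `𝒥₀ = {0}`, and `0` if `𝒥₀ = ℕ`. -/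
def muZero (F : Type*) [Field F] (Γ : AddSubgroup (ℕ → F)) (j0 : Bool) : ↥Γ →+ F :=
  if j0 then 0 else coordHom F Γ 0

/-- `span{μ_p : p ∈ {0} ∪ I_{1,3}}`. -/
def spanMu (F : Type*) [Field F] (ℓ : ℕ → ℕ) (Γ : AddSubgroup (ℕ → F)) (j0 : Bool) :
    Submodule F (↥Γ →+ F) :=
  Submodule.span F (insert (muZero F Γ j0) ((muP F ℓ Γ) '' ↑(iSet ℓ 1 3)))

/-!
Write `D = Σ c_p ∂_{t_p} + d_μ + ad u`. The derivations `∂_{t_p}` kill every `x^γ`, and `d_μ` kills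
every `t_q`. So `D 1 = 0` gives `∂₀ u = 0`, after which `[u, x^{1_{[r]}}]`, `[u, x^{1_{[r̄]}}]` and
`[u, t_q]` (`q ∉ Ī₂ ∪ J₃ ∪ I₅`) each isolate a single `∂_q u`. Together with `μ(σ_p) = 0`, this shows
that `∂_p u = ∂_{p̄} u = μ(1_{[p]}) x^{-σ_p}` for `p ∈ I₁₃`, that all other `∂_q u` vanish, and that
`(2 - ∂) u = λ` is a constant. The derivations `∂_q` have only the constants as a common kernel,
so this determines `u = λ/2 + Σ_{p ∈ I₁₃} μ(1_{[p]}) x^{-σ_p}`. Then `D x^γ = 0` reads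
`μ = -(Σ_{p ∈ I₁₃} μ(1_{[p]}) μ_p + λ μ₀)`, so `μ ∈ Hom* ∩ span{μ_p} = 0`. Hence `u = 0`, and finally
`D t_q = c_q` gives `c_q = 0`.
-/

lemma isLinearMap_finsuppSum_mul_smul {α R M : Type*} [Semiring R] [AddCommMonoid M] [Module R M]
    (f : α → R) (g : α → M) :
    IsLinearMap R fun u : α →₀ R => u.sum fun a c => (c * f a) • g a :=
  ⟨fun _ _ => Finsupp.sum_add_index' (fun _ => by simp) (fun _ _ _ => by rw [add_mul, add_smul]),
    fun r u => by
      rw [Finsupp.sum_smul_index' (fun _ => by simp), Finsupp.smul_sum]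
      exact Finsupp.sum_congr fun _ _ => by rw [smul_eq_mul, mul_assoc, mul_smul]⟩

lemma IsLinearMap.map_sum {R M M₂ ι : Type*} [Semiring R] [AddCommMonoid M] [AddCommMonoid M₂]
    [Module R M] [Module R M₂] {f : M → M₂} (lin : IsLinearMap R f) (s : Finset ι) (g : ι → M) :
    f (∑ i ∈ s, g i) = ∑ i ∈ s, f (g i) :=
  _root_.map_sum (lin.mk' f) g s

section

variable {F ℓ Γ j0}

/-! ### Index sets -/

lemma iot_mono : Monotone (iot ℓ) := fun _ _ h =>
  Finset.sum_le_sum_of_subset (Finset.Icc_subset_Icc le_rfl h)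

lemma iot_chain : iot ℓ 0 = 0 ∧ iot ℓ 1 ≤ iot ℓ 2 ∧ iot ℓ 2 ≤ iot ℓ 3 ∧ iot ℓ 3 ≤ iot ℓ 4 ∧
    iot ℓ 4 ≤ iot ℓ 5 ∧ iot ℓ 5 ≤ iot ℓ 6 :=
  ⟨by simp [iot], iot_mono (by norm_num), iot_mono (by norm_num), iot_mono (by norm_num),
    iot_mono (by norm_num), iot_mono (by norm_num)⟩

lemma mem_iSet {i j p : ℕ} : p ∈ iSet ℓ (i + 1) j ↔ iot ℓ i < p ∧ p ≤ iot ℓ j := by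
  simp [iSet]

lemma iSet_subset_iSet {i j i' j' : ℕ} (hi : i' ≤ i) (hj : j ≤ j') :
    iSet ℓ i j ⊆ iSet ℓ i' j' :=
  Finset.Icc_subset_Icc (Nat.add_le_add_right (iot_mono (Nat.sub_le_sub_right hi 1)) 1)
    (iot_mono hj)

lemma bar_of_le {p : ℕ} (h : p ≤ iot ℓ 6) : bar ℓ p = p + iot ℓ 6 := if_pos h

lemma mem_barSet_iSet {i j q : ℕ} (hj : j ≤ 6) :
    q ∈ barSet ℓ (iSet ℓ (i + 1) j) ↔ iot ℓ i + iot ℓ 6 < q ∧ q ≤ iot ℓ j + iot ℓ 6 := by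
  have := iot_mono (ℓ := ℓ) hj
  simp only [barSet, Finset.mem_image, mem_iSet]
  constructor
  · rintro ⟨p, hp, rfl⟩
    rw [bar_of_le (by omega)]
    omega
  · intro hq
    exact ⟨q - iot ℓ 6, by omega, by rw [bar_of_le (by omega)]; omega⟩

lemma mem_jSet {i j q : ℕ} (hj : j ≤ 6) : q ∈ jSet ℓ (i + 1) j ↔
    (iot ℓ i < q ∧ q ≤ iot ℓ j) ∨ (iot ℓ i + iot ℓ 6 < q ∧ q ≤ iot ℓ j + iot ℓ 6) := by
  rw [jSet, Finset.mem_union, mem_iSet, mem_barSet_iSet hj]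

def tSet (ℓ : ℕ → ℕ) : Finset ℕ := barSet ℓ (iSet ℓ 2 2) ∪ jSet ℓ 3 3 ∪ iSet ℓ 5 5

lemma mem_tSet {q : ℕ} : q ∈ tSet ℓ ↔ (iot ℓ 2 < q ∧ q ≤ iot ℓ 3) ∨ (iot ℓ 4 < q ∧ q ≤ iot ℓ 5) ∨
    (iot ℓ 1 + iot ℓ 6 < q ∧ q ≤ iot ℓ 3 + iot ℓ 6) := by
  have hι := iot_chain (ℓ := ℓ)
  simp (disch := omega) only [tSet, Finset.mem_union, mem_iSet, mem_jSet, mem_barSet_iSet]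
  omega

lemma single_mem_jIdx {q : ℕ}
    (hq : (iot ℓ 2 < q ∧ q ≤ iot ℓ 3) ∨ (iot ℓ 4 < q ∧ q ≤ iot ℓ 6) ∨
      (iot ℓ 1 + iot ℓ 6 < q ∧ q ≤ 2 * iot ℓ 6)) :
    (Pi.single q 1 : ℕ → ℕ) ∈ jIdx ℓ j0 := by
  have hι := iot_chain (ℓ := ℓ)
  refine ⟨fun _ => Pi.single_eq_of_ne (by omega) 1, fun p hp hpq => Pi.single_eq_of_ne ?_ 1⟩
  rintro rfl
  simp (disch := omega) only [Finset.mem_union, mem_iSet, mem_barSet_iSet] at hpq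
  omega

lemma single_zero_mem_jIdx : (Pi.single 0 1 : ℕ → ℕ) ∈ jIdx ℓ true :=
  ⟨nofun, fun _ hp _ => Pi.single_eq_of_ne (by omega) 1⟩

lemma mem_iSet_one_six {p : ℕ} (hp : p ∈ iSet ℓ 1 6) :
    p ∈ iSet ℓ 1 3 ∨ p ∈ iSet ℓ 4 5 ∨ p ∈ iSet ℓ 6 6 := by
  have hι := iot_chain (ℓ := ℓ)
  simp only [mem_iSet] at hp ⊢
  omega

lemma sgm_of_mem_I13 {p : ℕ} (hp : p ∈ iSet ℓ 1 3) :
    sgm F ℓ p = -(Pi.single p 1 + Pi.single (bar ℓ p) 1) := by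
  have hι := iot_chain (ℓ := ℓ)
  have h6 : p ≤ iot ℓ 6 := by rw [mem_iSet] at hp; omega
  simp only [sgm, if_pos h6, if_pos hp, bar_of_le h6, neg_add]
  abel

lemma sgm_of_mem_I45 {p : ℕ} (hp : p ∈ iSet ℓ 4 5) : sgm F ℓ p = -Pi.single p 1 := by
  have hι := iot_chain (ℓ := ℓ)
  have h6 : p ≤ iot ℓ 6 := by rw [mem_iSet] at hp; omega
  have h13 : p ∉ iSet ℓ 1 3 := by rw [mem_iSet] at hp ⊢; omega
  simp only [sgm, if_pos h6, if_neg h13, if_pos hp]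

lemma sgm_of_mem_I6 {p : ℕ} (hp : p ∈ iSet ℓ 6 6) : sgm F ℓ p = 0 := by
  have hι := iot_chain (ℓ := ℓ)
  rw [mem_iSet] at hp
  have h13 : p ∉ iSet ℓ 1 3 := by rw [mem_iSet]; omega
  have h45 : p ∉ iSet ℓ 4 5 := by rw [mem_iSet]; omega
  simp only [sgm, if_pos hp.2, if_neg h13, if_neg h45]

lemma sgm_mem (hΓ1 : ∀ p ∈ jSet ℓ 1 3 ∪ iSet ℓ 4 5, (Pi.single p (1 : F) : ℕ → F) ∈ Γ)
    {p : ℕ} (hp : p ∈ iSet ℓ 1 6) : sgm F ℓ p ∈ Γ := by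
  rcases mem_iSet_one_six hp with hp | hp | hp
  · rw [sgm_of_mem_I13 hp]
    exact Γ.neg_mem (Γ.add_mem (hΓ1 _ (by simp [jSet, hp]))
      (hΓ1 _ (Finset.mem_union_left _ (Finset.mem_union_right _ (Finset.mem_image_of_mem _ hp)))))
  · rw [sgm_of_mem_I45 hp]
    exact Γ.neg_mem (hΓ1 _ (Finset.mem_union_right _ hp))
  · rw [sgm_of_mem_I6 hp]
    exact Γ.zero_mem

/-! ### The algebra `𝒜` and the operators on it -/

local notation "𝒦" => CA F ℓ Γ j0
local infixl:70 " ⋆ " => mulA F ℓ Γ j0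

lemma zero_mem_jIdx : (0 : ℕ → ℕ) ∈ jIdx ℓ j0 :=
  ⟨fun _ => rfl, fun _ _ _ => rfl⟩

lemma tsub_mem_jIdx {i : ℕ → ℕ} (hi : i ∈ jIdx ℓ j0) (j : ℕ → ℕ) : i - j ∈ jIdx ℓ j0 :=
  ⟨fun h => by simp [hi.1 h], fun p hp hP => by simp [hi.2 p hp hP]⟩

lemma X_of_mem {α : ℕ → F} {i : ℕ → ℕ} (hα : α ∈ Γ) (hi : i ∈ jIdx ℓ j0) :
    X F ℓ Γ j0 α i = Finsupp.single (⟨α, hα⟩, ⟨i, hi⟩) 1 :=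
  dif_pos ⟨hα, hi⟩

lemma X_coe (a : ↥Γ × ↥(jIdx ℓ j0)) : X F ℓ Γ j0 a.1.1 a.2.1 = Finsupp.single a 1 :=
  X_of_mem a.1.2 a.2.2

lemma X_ne_zero {α : ℕ → F} {i : ℕ → ℕ} (hα : α ∈ Γ) (hi : i ∈ jIdx ℓ j0) :
    X F ℓ Γ j0 α i ≠ 0 := by
  rw [X_of_mem hα hi]
  exact Finsupp.single_ne_zero.2 one_ne_zero

lemma smul_X_eq_zero_iff {α : ℕ → F} {i : ℕ → ℕ} (hα : α ∈ Γ) (hi : i ∈ jIdx ℓ j0) {r : F} :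
    r • X F ℓ Γ j0 α i = 0 ↔ r = 0 :=
  smul_eq_zero.trans (or_iff_left (X_ne_zero hα hi))

lemma smul_X_left_inj {α : ℕ → F} {i : ℕ → ℕ} (hα : α ∈ Γ) (hi : i ∈ jIdx ℓ j0) {r s : F} :
    r • X F ℓ Γ j0 α i = s • X F ℓ Γ j0 α i ↔ r = s := by
  rw [← sub_eq_zero, ← sub_smul, smul_X_eq_zero_iff hα hi, sub_eq_zero]

lemma mulA_comm (u v : 𝒦) : u ⋆ v = v ⋆ u := by
  simp only [mulA, Finsupp.sum]
  rw [Finset.sum_comm]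
  refine Finset.sum_congr rfl fun b _ => Finset.sum_congr rfl fun a _ => ?_
  rw [mul_comm, add_comm b.1.1, add_comm b.2.1]

lemma add_mulA (u v w : 𝒦) : (u + v) ⋆ w = u ⋆ w + v ⋆ w := by
  refine Finsupp.sum_add_index' (fun a => by simp) (fun a c₁ c₂ => ?_)
  rw [← Finsupp.sum_add]
  exact Finsupp.sum_congr fun b _ => by rw [add_mul, add_smul]

lemma smul_mulA (r : F) (u v : 𝒦) : (r • u) ⋆ v = r • (u ⋆ v) := by
  simp only [mulA]
  rw [Finsupp.sum_smul_index' (fun a => by simp), Finsupp.smul_sum]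
  refine Finsupp.sum_congr fun a _ => ?_
  rw [Finsupp.smul_sum]
  exact Finsupp.sum_congr fun b _ => by rw [smul_eq_mul, mul_assoc, smul_smul]

lemma isLinearMap_mulA (u : 𝒦) : IsLinearMap F (mulA F ℓ Γ j0 u) :=
  ⟨fun v w => by rw [mulA_comm, add_mulA, mulA_comm v, mulA_comm w],
    fun r v => by rw [mulA_comm, smul_mulA, mulA_comm]⟩

lemma mulA_smul (r : F) (u v : 𝒦) : u ⋆ (r • v) = r • (u ⋆ v) :=
  (isLinearMap_mulA u).map_smul r v

lemma mulA_sub (u v w : 𝒦) : u ⋆ (v - w) = u ⋆ v - u ⋆ w :=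
  (isLinearMap_mulA u).map_sub v w

lemma mulA_zero (u : 𝒦) : u ⋆ 0 = 0 :=
  (isLinearMap_mulA u).map_zero

lemma mulA_neg (u v : 𝒦) : u ⋆ (-v) = -(u ⋆ v) := by
  rw [← zero_sub, mulA_sub, mulA_zero, zero_sub]

lemma zero_mulA (u : 𝒦) : 0 ⋆ u = 0 := by
  rw [mulA_comm, mulA_zero]

lemma mulA_X_X {α β : ℕ → F} {i j : ℕ → ℕ} (hα : α ∈ Γ) (hi : i ∈ jIdx ℓ j0)
    (hβ : β ∈ Γ) (hj : j ∈ jIdx ℓ j0) :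
    X F ℓ Γ j0 α i ⋆ X F ℓ Γ j0 β j = X F ℓ Γ j0 (α + β) (i + j) := by
  rw [X_of_mem hα hi, X_of_mem hβ hj, mulA, Finsupp.sum_single_index, Finsupp.sum_single_index]
    <;> simp

lemma one_mulA (v : 𝒦) : X F ℓ Γ j0 0 0 ⋆ v = v := by
  induction v using Finsupp.induction_linear with
  | zero => exact mulA_zero _
  | add v w hv hw => rw [(isLinearMap_mulA _).map_add, hv, hw]
  | single a r =>
    rw [← Finsupp.smul_single_one, mulA_smul, ← X_coe,
      mulA_X_X Γ.zero_mem zero_mem_jIdx a.1.2 a.2.2, zero_add, zero_add]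

lemma mulA_one (v : 𝒦) : v ⋆ X F ℓ Γ j0 0 0 = v := by
  rw [mulA_comm, one_mulA]

lemma X_mulA_X_mulA {β γ : ℕ → F} (hβ : β ∈ Γ) (hγ : γ ∈ Γ) (v : 𝒦) :
    X F ℓ Γ j0 β 0 ⋆ (X F ℓ Γ j0 γ 0 ⋆ v) = X F ℓ Γ j0 (β + γ) 0 ⋆ v := by
  induction v using Finsupp.induction_linear with
  | zero => simp only [mulA_zero]
  | add v w hv hw => simp only [(isLinearMap_mulA _).map_add, hv, hw]
  | single a r =>
    rw [← Finsupp.smul_single_one, mulA_smul, mulA_smul, mulA_smul, ← X_coe,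
      mulA_X_X hγ zero_mem_jIdx a.1.2 a.2.2, zero_add,
      mulA_X_X hβ zero_mem_jIdx (Γ.add_mem hγ a.1.2) a.2.2,
      mulA_X_X (Γ.add_mem hβ hγ) zero_mem_jIdx a.1.2 a.2.2, zero_add, add_assoc]

lemma eq_X_neg_mulA_of_X_mulA_eq {β : ℕ → F} (hβ : β ∈ Γ) {w z : 𝒦}
    (h : X F ℓ Γ j0 β 0 ⋆ w = z) : w = X F ℓ Γ j0 (-β) 0 ⋆ z := by
  rw [← h, X_mulA_X_mulA (Γ.neg_mem hβ) hβ, neg_add_cancel, one_mulA]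

lemma isLinearMap_pstar (p : ℕ) : IsLinearMap F (pstar F ℓ Γ j0 p) :=
  isLinearMap_finsuppSum_mul_smul _ _

lemma isLinearMap_pt (p : ℕ) : IsLinearMap F (pt F ℓ Γ j0 p) :=
  isLinearMap_finsuppSum_mul_smul _ _

lemma isLinearMap_dd (p : ℕ) : IsLinearMap F (dd F ℓ Γ j0 p) :=
  ⟨fun u v => by
    simp only [dd, (isLinearMap_pstar p).map_add, (isLinearMap_pt p).map_add]
    abel,
  fun r u => by simp only [dd, (isLinearMap_pstar p).map_smul, (isLinearMap_pt p).map_smul,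
    smul_add]⟩

lemma isLinearMap_Dop : IsLinearMap F (Dop F ℓ Γ j0) :=
  ⟨fun u v => by
    simp only [Dop, (isLinearMap_pstar _).map_add, (isLinearMap_pt _).map_add,
      (isLinearMap_mulA _).map_add, Finset.sum_add_distrib]
    abel,
  fun r u => by simp only [Dop, (isLinearMap_pstar _).map_smul, (isLinearMap_pt _).map_smul,
    mulA_smul, ← Finset.smul_sum, smul_add]⟩

lemma dd_sub (p : ℕ) (u v : 𝒦) : dd F ℓ Γ j0 p (u - v) = dd F ℓ Γ j0 p u - dd F ℓ Γ j0 p v :=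
  (isLinearMap_dd p).map_sub u v

lemma Dop_sub (u v : 𝒦) : Dop F ℓ Γ j0 (u - v) = Dop F ℓ Γ j0 u - Dop F ℓ Γ j0 v :=
  isLinearMap_Dop.map_sub u v

lemma pstar_X (p : ℕ) (α : ℕ → F) (i : ℕ → ℕ) :
    pstar F ℓ Γ j0 p (X F ℓ Γ j0 α i) = α p • X F ℓ Γ j0 α i := by
  by_cases h : α ∈ Γ ∧ i ∈ jIdx ℓ j0
  · rw [X_of_mem h.1 h.2, pstar, Finsupp.sum_single_index (by simp), one_mul]
  · rw [X, dif_neg h, (isLinearMap_pstar p).map_zero, smul_zero]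

lemma pt_X {α : ℕ → F} {i : ℕ → ℕ} (hα : α ∈ Γ) (hi : i ∈ jIdx ℓ j0) (p : ℕ) :
    pt F ℓ Γ j0 p (X F ℓ Γ j0 α i) = (i p : F) • X F ℓ Γ j0 α (i - Pi.single p 1) := by
  rw [X_of_mem hα hi, pt, Finsupp.sum_single_index (by simp), one_mul]

lemma dd_X_zero {α : ℕ → F} (hα : α ∈ Γ) (p : ℕ) :
    dd F ℓ Γ j0 p (X F ℓ Γ j0 α 0) = α p • X F ℓ Γ j0 α 0 := by
  rw [dd, pstar_X, pt_X hα zero_mem_jIdx, Pi.zero_apply, Nat.cast_zero, zero_smul, add_zero]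

lemma dd_X_single {q : ℕ} (hq : (Pi.single q 1 : ℕ → ℕ) ∈ jIdx ℓ j0) (p : ℕ) :
    dd F ℓ Γ j0 p (X F ℓ Γ j0 0 (Pi.single q 1)) = if p = q then X F ℓ Γ j0 0 0 else 0 := by
  rw [dd, pstar_X, pt_X Γ.zero_mem hq, Pi.zero_apply, zero_smul, zero_add]
  split_ifs with h
  · subst h
    simp
  · simp [Pi.single_eq_of_ne h]

lemma dd_X_single_eq_ite {r : ℕ} (hr : (Pi.single r 1 : ℕ → F) ∈ Γ) (p : ℕ) :
    dd F ℓ Γ j0 p (X F ℓ Γ j0 (Pi.single r 1) 0) =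
      if p = r then X F ℓ Γ j0 (Pi.single r 1) 0 else 0 := by
  rw [dd_X_zero hr]
  split_ifs with h
  · rw [h, Pi.single_eq_same, one_smul]
  · rw [Pi.single_eq_of_ne h, zero_smul]

lemma Dop_X_zero {α : ℕ → F} (hα : α ∈ Γ) :
    Dop F ℓ Γ j0 (X F ℓ Γ j0 α 0) = (∑ p ∈ jSet ℓ 1 3 ∪ iSet ℓ 4 5, α p) • X F ℓ Γ j0 α 0 := by
  simp [Dop, pstar_X, pt_X hα zero_mem_jIdx, mulA_zero, Finset.sum_smul]

lemma Dop_one : Dop F ℓ Γ j0 (X F ℓ Γ j0 0 0) = 0 := by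
  simp [Dop_X_zero Γ.zero_mem]

lemma dmu_X (μ : ↥Γ → F) {α : ℕ → F} {i : ℕ → ℕ} (hα : α ∈ Γ) (hi : i ∈ jIdx ℓ j0) :
    dmu F ℓ Γ j0 μ (X F ℓ Γ j0 α i) = μ ⟨α, hα⟩ • X F ℓ Γ j0 α i := by
  rw [X_of_mem hα hi, dmu, Finsupp.sum_single_index (by simp), one_mul]

lemma brk_zero_left (v : 𝒦) : brk F ℓ Γ j0 0 v = 0 := by
  simp [brk, (isLinearMap_dd _).map_zero, isLinearMap_Dop.map_zero, zero_mulA, mulA_zero]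

lemma brk_one (u : 𝒦) : brk F ℓ Γ j0 u (X F ℓ Γ j0 0 0) = -((2 : F) • dd F ℓ Γ j0 0 u) := by
  simp [brk, dd_X_zero Γ.zero_mem, Dop_one, mulA_zero, mulA_smul, mulA_one]

lemma brk_eq_of_dd_zero_eq_zero {u : 𝒦} (h0 : dd F ℓ Γ j0 0 u = 0) (v : 𝒦) :
    brk F ℓ Γ j0 u v =
      (∑ p ∈ iSet ℓ 1 6, X F ℓ Γ j0 (sgm F ℓ p) 0 ⋆
        (dd F ℓ Γ j0 p u ⋆ dd F ℓ Γ j0 (bar ℓ p) v - dd F ℓ Γ j0 (bar ℓ p) u ⋆ dd F ℓ Γ j0 p v)) +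
      ((2 : F) • u - Dop F ℓ Γ j0 u) ⋆ dd F ℓ Γ j0 0 v := by
  rw [brk, h0, zero_mulA, sub_zero]

lemma brk_eq_of_dd_eq_ite {u v w : 𝒦} (h0 : dd F ℓ Γ j0 0 u = 0) {s : ℕ} (hs : s ∈ iSet ℓ 1 6)
    (hv : ∀ r, dd F ℓ Γ j0 r v = if r = s then w else 0) :
    brk F ℓ Γ j0 u v = -(X F ℓ Γ j0 (sgm F ℓ s) 0 ⋆ (dd F ℓ Γ j0 (bar ℓ s) u ⋆ w)) := by
  have hbar : ∀ p ∈ iSet ℓ 1 6, bar ℓ p ≠ s := fun p hp => by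
    rw [mem_iSet] at hs hp
    rw [bar_of_le hp.2]
    omega
  rw [brk_eq_of_dd_zero_eq_zero h0, Finset.sum_eq_single_of_mem s hs fun p hp hps => by
    simp [hv, hbar p hp, hps, mulA_zero]]
  have hs0 : (0 : ℕ) ≠ s := by rw [mem_iSet] at hs; omega
  simp [hv, hbar s hs, hs0, mulA_zero, mulA_neg]

lemma brk_eq_of_dd_eq_ite_bar {u v w : 𝒦} (h0 : dd F ℓ Γ j0 0 u = 0) {s : ℕ} (hs : s ∈ iSet ℓ 1 6)
    (hv : ∀ r, dd F ℓ Γ j0 r v = if r = bar ℓ s then w else 0) :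
    brk F ℓ Γ j0 u v = X F ℓ Γ j0 (sgm F ℓ s) 0 ⋆ (dd F ℓ Γ j0 s u ⋆ w) := by
  rw [mem_iSet] at hs
  have hbar : ∀ p ∈ iSet ℓ 1 6, p ≠ bar ℓ s := fun p hp => by
    rw [mem_iSet] at hp
    rw [bar_of_le hs.2]
    omega
  have hinj : ∀ p ∈ iSet ℓ 1 6, bar ℓ p = bar ℓ s → p = s := fun p hp h => by
    rw [mem_iSet] at hp
    rw [bar_of_le hs.2, bar_of_le hp.2] at h
    omega
  rw [brk_eq_of_dd_zero_eq_zero h0, Finset.sum_eq_single_of_mem s (mem_iSet.2 hs) fun p hp hps => by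
    simp [hv, hbar p hp, mt (hinj p hp) hps, mulA_zero]]
  have hs0 : (0 : ℕ) ≠ bar ℓ s := by rw [bar_of_le hs.2]; omega
  simp [hv, hbar s (mem_iSet.2 hs), hs0, mulA_zero]

lemma brk_eq_of_dd_eq_ite_zero {u v w : 𝒦} (h0 : dd F ℓ Γ j0 0 u = 0)
    (hv : ∀ r, dd F ℓ Γ j0 r v = if r = 0 then w else 0) :
    brk F ℓ Γ j0 u v = ((2 : F) • u - Dop F ℓ Γ j0 u) ⋆ w := by
  have hpos : ∀ p ∈ iSet ℓ 1 6, p ≠ 0 ∧ bar ℓ p ≠ 0 := fun p hp => by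
    rw [mem_iSet] at hp
    rw [bar_of_le hp.2]
    omega
  rw [brk_eq_of_dd_zero_eq_zero h0, Finset.sum_eq_zero fun p hp => by
    simp [hv, hpos p hp, mulA_zero]]
  simp [hv]

/-! ### The common kernel of the `∂_q` -/

lemma pstar_apply (q : ℕ) (w : 𝒦) (b : ↥Γ × ↥(jIdx ℓ j0)) :
    pstar F ℓ Γ j0 q w b = b.1.1 q * w b := by
  induction w using Finsupp.induction_linear with
  | zero => simp [(isLinearMap_pstar q).map_zero]
  | add v w hv hw => simp [(isLinearMap_pstar q).map_add, hv, hw, mul_add]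
  | single a r =>
    rw [← Finsupp.smul_single_one, (isLinearMap_pstar q).map_smul, ← X_coe, pstar_X, X_coe]
    by_cases h : a = b
    · subst h
      simp [mul_comm]
    · simp [h]

lemma single_one_le_of_ne_zero {i : ℕ → ℕ} {q : ℕ} (h : i q ≠ 0) : Pi.single q 1 ≤ i :=
  fun r => by
    rcases eq_or_ne r q with rfl | hr
    · simpa [Nat.one_le_iff_ne_zero] using h
    · simp [Pi.single_eq_of_ne hr]

open Classical in
lemma pt_single_apply (q : ℕ) (a b : ↥Γ × ↥(jIdx ℓ j0)) (r : F) :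
    pt F ℓ Γ j0 q (Finsupp.single a r) b =
      if a.1 = b.1 ∧ a.2.1 = b.2.1 + Pi.single q 1 then ((b.2.1 q + 1 : ℕ) : F) * r else 0 := by
  rw [pt, Finsupp.sum_single_index (by simp), X_of_mem a.1.2 (tsub_mem_jIdx a.2.2 _),
    Finsupp.smul_apply, Finsupp.single_apply, smul_eq_mul]
  by_cases hq : a.2.1 q = 0
  · rw [hq, Nat.cast_zero, mul_zero, zero_mul, eq_comm, ite_eq_right_iff]
    rintro ⟨-, h⟩
    simp [h] at hq
  · have hshift : a.2.1 - Pi.single q 1 = b.2.1 ↔ a.2.1 = b.2.1 + Pi.single q 1 :=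
      tsub_eq_iff_eq_add_of_le (single_one_le_of_ne_zero hq)
    have hiff : (a.1, (⟨a.2.1 - Pi.single q 1, tsub_mem_jIdx a.2.2 _⟩ : ↥(jIdx ℓ j0))) = b ↔
        a.1 = b.1 ∧ a.2.1 = b.2.1 + Pi.single q 1 := by
      rw [Prod.ext_iff]
      exact and_congr Iff.rfl (Subtype.ext_iff.trans hshift)
    simp only [hiff]
    split_ifs with h
    · rw [h.2]
      simp [mul_comm]
    · simp

open Classical in
lemma pt_apply (q : ℕ) (w : 𝒦) (b : ↥Γ × ↥(jIdx ℓ j0)) :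
    pt F ℓ Γ j0 q w b = ∑ a ∈ w.support,
      if a.1 = b.1 ∧ a.2.1 = b.2.1 + Pi.single q 1 then ((b.2.1 q + 1 : ℕ) : F) * w a else 0 := by
  conv_lhs => rw [← Finsupp.sum_single w]
  rw [Finsupp.sum, (isLinearMap_pt q).map_sum]
  simp [pt_single_apply]

lemma pstar_add_pt_apply_eq_zero {q : ℕ} {w : 𝒦} (h : dd F ℓ Γ j0 q w = 0)
    (b : ↥Γ × ↥(jIdx ℓ j0)) : b.1.1 q * w b + pt F ℓ Γ j0 q w b = 0 := by
  rw [← pstar_apply, ← Finsupp.add_apply, ← dd, h, Finsupp.zero_apply]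

lemma fst_apply_eq_zero_of_dd_eq_zero {q : ℕ} {w : 𝒦} (h : dd F ℓ Γ j0 q w = 0)
    {a : ↥Γ × ↥(jIdx ℓ j0)} (ha : a ∈ w.support) : a.1.1 q = 0 := by
  classical
  by_contra hne
  -- a support element with `α_q ≠ 0` and maximal `i_q` cannot be hit by `∂_{t_q}`
  obtain ⟨b, hb, hmax⟩ := (w.support.filter fun a => a.1.1 q ≠ 0).exists_max_image
    (fun a => a.2.1 q) ⟨a, Finset.mem_filter.2 ⟨ha, hne⟩⟩
  rw [Finset.mem_filter, Finsupp.mem_support_iff] at hb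
  have hpt : pt F ℓ Γ j0 q w b ≠ 0 := fun h0 => by
    simpa [h0, hb.1, hb.2] using pstar_add_pt_apply_eq_zero h b
  rw [pt_apply] at hpt
  obtain ⟨a', ha', hne'⟩ := Finset.exists_ne_zero_of_sum_ne_zero hpt
  split_ifs at hne' with hc
  · have := hmax a' (Finset.mem_filter.2 ⟨ha', by rw [hc.1]; exact hb.2⟩)
    simp [hc.2] at this
  · exact hne' rfl

lemma snd_apply_eq_zero_of_dd_eq_zero [CharZero F] {q : ℕ} {w : 𝒦} (h : dd F ℓ Γ j0 q w = 0)
    {a : ↥Γ × ↥(jIdx ℓ j0)} (ha : a ∈ w.support) : a.2.1 q = 0 := by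
  classical
  have hpt : ∀ b, pt F ℓ Γ j0 q w b = 0 := fun b => by
    by_cases hb : w b = 0
    · simpa [hb] using pstar_add_pt_apply_eq_zero h b
    · simpa [fst_apply_eq_zero_of_dd_eq_zero h (Finsupp.mem_support_iff.2 hb)] using
        pstar_add_pt_apply_eq_zero h b
  by_contra hq
  have hle := single_one_le_of_ne_zero hq
  have hb := hpt (a.1, ⟨a.2.1 - Pi.single q 1, tsub_mem_jIdx a.2.2 _⟩)
  rw [pt_apply, Finset.sum_eq_single_of_mem a ha, if_pos ⟨rfl, (tsub_add_cancel_of_le hle).symm⟩]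
    at hb
  · exact mul_ne_zero (Nat.cast_ne_zero.2 (Nat.succ_ne_zero _)) (Finsupp.mem_support_iff.1 ha) hb
  · rintro a' - hne
    rw [if_neg]
    rintro ⟨h1, h2⟩
    exact hne (Prod.ext h1 (Subtype.ext (h2.trans (tsub_add_cancel_of_le hle))))

lemma exists_eq_smul_one_of_dd_eq_zero [CharZero F]
    (hΓ3 : ∀ α ∈ Γ, ∀ p, 2 * iot ℓ 6 < p → α p = 0) {w : 𝒦}
    (h : ∀ q ≤ 2 * iot ℓ 6, dd F ℓ Γ j0 q w = 0) : ∃ r : F, w = r • X F ℓ Γ j0 0 0 := by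
  refine ⟨w (⟨0, Γ.zero_mem⟩, ⟨0, zero_mem_jIdx⟩), ?_⟩
  rw [X_of_mem Γ.zero_mem zero_mem_jIdx, Finsupp.smul_single_one,
    ← Finsupp.support_subset_singleton]
  intro a ha
  rw [Finset.mem_singleton]
  refine Prod.ext (Subtype.ext (funext fun r => ?_)) (Subtype.ext (funext fun r => ?_))
  all_goals by_cases hr : r ≤ 2 * iot ℓ 6
  · exact fst_apply_eq_zero_of_dd_eq_zero (h r hr) ha
  · exact hΓ3 _ a.1.2 r (by omega)
  · exact snd_apply_eq_zero_of_dd_eq_zero (h r hr) ha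
  · exact a.2.2.2 r (by omega) (Or.inr (by omega))

/-! ### Consequences of `D = 0` -/

lemma eq_smul_X_of_X_mulA_mulA_X_eq {β γ δ : ℕ → F} (hβ : β ∈ Γ) (hγ : γ ∈ Γ) (hδ : δ ∈ Γ)
    {w : 𝒦} {r : F} (h : X F ℓ Γ j0 β 0 ⋆ (w ⋆ X F ℓ Γ j0 γ 0) = r • X F ℓ Γ j0 δ 0) :
    w = r • X F ℓ Γ j0 (δ - β - γ) 0 := by
  have h' := eq_X_neg_mulA_of_X_mulA_eq hβ h
  rw [mulA_comm] at h'
  rw [eq_X_neg_mulA_of_X_mulA_eq hγ h', mulA_smul, mulA_smul,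
    mulA_X_X (Γ.neg_mem hβ) zero_mem_jIdx hδ zero_mem_jIdx, add_zero,
    mulA_X_X (Γ.neg_mem hγ) zero_mem_jIdx (Γ.add_mem (Γ.neg_mem hβ) hδ) zero_mem_jIdx]
  congr 2
  abel

lemma eq_zero_of_X_mulA_eq_zero {β : ℕ → F} (hβ : β ∈ Γ) {w : 𝒦}
    (h : X F ℓ Γ j0 β 0 ⋆ w = 0) : w = 0 := by
  rw [eq_X_neg_mulA_of_X_mulA_eq hβ h, mulA_zero]

lemma sum_smul_pt_X_zero (c : ℕ → F) (s : Finset ℕ) {γ : ℕ → F} (hγ : γ ∈ Γ) :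
    ∑ p ∈ s, c p • pt F ℓ Γ j0 p (X F ℓ Γ j0 γ 0) = 0 :=
  Finset.sum_eq_zero fun p _ => by simp [pt_X hγ zero_mem_jIdx]

open Classical in
/-- `μ(1_{[p]})`, with the junk value `0` when `1_{[p]} ∉ Γ`. -/
def evalSingle (μ : ↥Γ →+ F) (p : ℕ) : F :=
  if h : (Pi.single p 1 : ℕ → F) ∈ Γ then μ ⟨_, h⟩ else 0

lemma evalSingle_of_mem {μ : ↥Γ →+ F} {p : ℕ} (h : (Pi.single p 1 : ℕ → F) ∈ Γ) :
    evalSingle μ p = μ ⟨_, h⟩ :=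
  dif_pos h

lemma evalSingle_bar_of_mem_homPrime {μ : ↥Γ →+ F} (hμ : μ ∈ homPrime F ℓ Γ) {p : ℕ}
    (hp : p ∈ iSet ℓ 1 3) (h : (Pi.single p 1 : ℕ → F) ∈ Γ)
    (h' : (Pi.single (bar ℓ p) 1 : ℕ → F) ∈ Γ) :
    evalSingle μ (bar ℓ p) = -evalSingle μ p := by
  have hΓ : sgm F ℓ p ∈ Γ := by
    rw [sgm_of_mem_I13 hp]
    exact Γ.neg_mem (Γ.add_mem h h')
  have hσ : (⟨sgm F ℓ p, hΓ⟩ : ↥Γ) = -(⟨_, h⟩ + ⟨_, h'⟩) := Subtype.ext (sgm_of_mem_I13 hp)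
  have := hμ p (iSet_subset_iSet le_rfl (by norm_num) hp) hΓ
  rw [hσ, map_neg, map_add, neg_eq_zero] at this
  rw [evalSingle_of_mem h, evalSingle_of_mem h']
  linear_combination this

def coeffZero (j0 : Bool) (μ : ↥Γ →+ F) : F := if j0 then 0 else -evalSingle μ 0

/-- The element `u` is forced to be (`DerivationSumVanishes.eq_adPart`); `coeffZero j0 μ` is the
scalar `λ` with `(2 - ∂) u = λ • 1`. -/
def adPart (ℓ : ℕ → ℕ) (j0 : Bool) (μ : ↥Γ →+ F) : CA F ℓ Γ j0 :=
  (coeffZero j0 μ / 2) • X F ℓ Γ j0 0 0 +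
    ∑ p ∈ iSet ℓ 1 3, evalSingle μ p • X F ℓ Γ j0 (-sgm F ℓ p) 0

lemma neg_sgm_apply_of_le {r p : ℕ} (hr : r ∈ iSet ℓ 1 3) (hp : p ≤ iot ℓ 6) :
    (-sgm F ℓ r) p = if r = p then 1 else 0 := by
  have hι := iot_chain (ℓ := ℓ)
  rw [sgm_of_mem_I13 hr, neg_neg, Pi.add_apply, Pi.single_apply, Pi.single_apply,
    if_neg (show p ≠ bar ℓ r by rw [mem_iSet] at hr; rw [bar_of_le (by omega)]; omega), add_zero]
  simp only [eq_comm]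

lemma neg_sgm_apply_bar {r p : ℕ} (hr : r ∈ iSet ℓ 1 3) (hp : p ∈ iSet ℓ 1 6) :
    (-sgm F ℓ r) (bar ℓ p) = if r = p then 1 else 0 := by
  have hι := iot_chain (ℓ := ℓ)
  rw [mem_iSet] at hr hp
  rw [sgm_of_mem_I13 (mem_iSet.2 hr), neg_neg, Pi.add_apply, Pi.single_apply, Pi.single_apply,
    if_neg (show bar ℓ p ≠ r by rw [bar_of_le hp.2]; omega), zero_add, bar_of_le hp.2,
    bar_of_le (by omega)]
  simp only [add_left_inj, eq_comm]

lemma neg_sgm_mem (hΓ1 : ∀ p ∈ jSet ℓ 1 3 ∪ iSet ℓ 4 5, (Pi.single p (1 : F) : ℕ → F) ∈ Γ)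
    {r : ℕ} (hr : r ∈ iSet ℓ 1 3) : -sgm F ℓ r ∈ Γ :=
  Γ.neg_mem (sgm_mem hΓ1 (iSet_subset_iSet le_rfl (by norm_num) hr))

lemma dd_adPart (hΓ1 : ∀ p ∈ jSet ℓ 1 3 ∪ iSet ℓ 4 5, (Pi.single p (1 : F) : ℕ → F) ∈ Γ)
    (μ : ↥Γ →+ F) {p q : ℕ} (hq : ∀ r ∈ iSet ℓ 1 3, (-sgm F ℓ r) q = if r = p then 1 else 0) :
    dd F ℓ Γ j0 q (adPart ℓ j0 μ) =
      if p ∈ iSet ℓ 1 3 then evalSingle μ p • X F ℓ Γ j0 (-sgm F ℓ p) 0 else 0 := by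
  rw [adPart, (isLinearMap_dd q).map_add, (isLinearMap_dd q).map_smul, dd_X_zero Γ.zero_mem,
    Pi.zero_apply, zero_smul, smul_zero, zero_add, (isLinearMap_dd q).map_sum]
  rw [Finset.sum_congr rfl fun r hr => by
    rw [(isLinearMap_dd q).map_smul, dd_X_zero (neg_sgm_mem hΓ1 hr), hq r hr, ite_smul, one_smul,
      zero_smul, smul_ite, smul_zero]]
  exact Finset.sum_ite_eq' _ _ _

lemma Dop_X_neg_sgm (hΓ1 : ∀ p ∈ jSet ℓ 1 3 ∪ iSet ℓ 4 5, (Pi.single p (1 : F) : ℕ → F) ∈ Γ)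
    {r : ℕ} (hr : r ∈ iSet ℓ 1 3) :
    Dop F ℓ Γ j0 (X F ℓ Γ j0 (-sgm F ℓ r) 0) = (2 : F) • X F ℓ Γ j0 (-sgm F ℓ r) 0 := by
  have h : r ∈ jSet ℓ 1 3 ∪ iSet ℓ 4 5 := by simp [jSet, hr]
  have h' : bar ℓ r ∈ jSet ℓ 1 3 ∪ iSet ℓ 4 5 :=
    Finset.mem_union_left _ (Finset.mem_union_right _ (Finset.mem_image_of_mem _ hr))
  rw [Dop_X_zero (neg_sgm_mem hΓ1 hr), sgm_of_mem_I13 hr, neg_neg]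
  simp only [Pi.add_apply, Finset.sum_add_distrib, Finset.sum_pi_single', if_pos h, if_pos h']
  norm_num

lemma two_smul_sub_Dop_adPart [CharZero F]
    (hΓ1 : ∀ p ∈ jSet ℓ 1 3 ∪ iSet ℓ 4 5, (Pi.single p (1 : F) : ℕ → F) ∈ Γ)
    (μ : ↥Γ →+ F) :
    (2 : F) • adPart ℓ j0 μ - Dop F ℓ Γ j0 (adPart ℓ j0 μ) = coeffZero j0 μ • X F ℓ Γ j0 0 0 := by
  have hsum : Dop F ℓ Γ j0 (∑ r ∈ iSet ℓ 1 3, evalSingle μ r • X F ℓ Γ j0 (-sgm F ℓ r) 0) =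
      (2 : F) • ∑ r ∈ iSet ℓ 1 3, evalSingle μ r • X F ℓ Γ j0 (-sgm F ℓ r) 0 := by
    rw [isLinearMap_Dop.map_sum, Finset.smul_sum]
    exact Finset.sum_congr rfl fun r hr => by
      rw [isLinearMap_Dop.map_smul, Dop_X_neg_sgm hΓ1 hr, smul_comm]
  rw [adPart, isLinearMap_Dop.map_add, isLinearMap_Dop.map_smul, Dop_X_zero Γ.zero_mem, hsum,
    smul_add, smul_smul, mul_div_cancel₀ _ two_ne_zero]
  simp

lemma adPart_zero : adPart ℓ j0 (0 : ↥Γ →+ F) = 0 := by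
  simp [adPart, coeffZero, evalSingle]

def DerivationSumVanishes (c : ℕ → F) (μ : ↥Γ →+ F) (u : CA F ℓ Γ j0) : Prop :=
  ∀ v : CA F ℓ Γ j0,
    (∑ p ∈ tSet ℓ, c p • pt F ℓ Γ j0 p v) + dmu F ℓ Γ j0 ⇑μ v + brk F ℓ Γ j0 u v = 0

namespace DerivationSumVanishes

variable {c : ℕ → F} {μ : ↥Γ →+ F} {u : CA F ℓ Γ j0}

lemma brk_X_eq_neg_smul (hD : DerivationSumVanishes c μ u) {γ : ℕ → F} (hγ : γ ∈ Γ) :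
    brk F ℓ Γ j0 u (X F ℓ Γ j0 γ 0) = -(μ ⟨γ, hγ⟩ • X F ℓ Γ j0 γ 0) := by
  have h := hD (X F ℓ Γ j0 γ 0)
  rw [sum_smul_pt_X_zero c _ hγ, dmu_X _ hγ zero_mem_jIdx, zero_add] at h
  exact eq_neg_of_add_eq_zero_right h

lemma brk_X_single_eq_zero (hD : DerivationSumVanishes c μ u) {q : ℕ}
    (hq : (Pi.single q 1 : ℕ → ℕ) ∈ jIdx ℓ j0) (hqt : q ∉ tSet ℓ) :
    brk F ℓ Γ j0 u (X F ℓ Γ j0 0 (Pi.single q 1)) = 0 := by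
  have h := hD (X F ℓ Γ j0 0 (Pi.single q 1))
  have hμ0 : μ ⟨0, Γ.zero_mem⟩ = 0 := map_zero μ
  rwa [Finset.sum_eq_zero fun p hp => ?_, dmu_X _ Γ.zero_mem hq, hμ0, zero_smul, zero_add,
    zero_add] at h
  rw [pt_X Γ.zero_mem hq, Pi.single_eq_of_ne (by rintro rfl; exact hqt hp), Nat.cast_zero,
    zero_smul, smul_zero]

lemma apply_eq_zero_of_mem_tSet (hD : DerivationSumVanishes c 0 (0 : CA F ℓ Γ j0)) {q : ℕ}
    (hq : q ∈ tSet ℓ) : c q = 0 := by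
  have hι := iot_chain (ℓ := ℓ)
  have hmem : (Pi.single q 1 : ℕ → ℕ) ∈ jIdx ℓ j0 := single_mem_jIdx (by rw [mem_tSet] at hq; omega)
  have h := hD (X F ℓ Γ j0 0 (Pi.single q 1))
  rw [brk_zero_left, add_zero, dmu_X _ Γ.zero_mem hmem, AddMonoidHom.zero_apply, zero_smul,
    add_zero, Finset.sum_eq_single_of_mem q hq fun p _ hpq => by
      rw [pt_X Γ.zero_mem hmem, Pi.single_eq_of_ne hpq, Nat.cast_zero, zero_smul, smul_zero],
    pt_X Γ.zero_mem hmem, Pi.single_eq_same, Nat.cast_one, one_smul, tsub_self] at h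
  exact (smul_X_eq_zero_iff Γ.zero_mem zero_mem_jIdx).1 h

variable [CharZero F]

lemma dd_zero_eq_zero (hD : DerivationSumVanishes c μ u) : dd F ℓ Γ j0 0 u = 0 := by
  have hμ0 : μ ⟨0, Γ.zero_mem⟩ = 0 := map_zero μ
  simpa [sum_smul_pt_X_zero c _ Γ.zero_mem, dmu_X _ Γ.zero_mem zero_mem_jIdx, hμ0, brk_one] using
    hD (X F ℓ Γ j0 0 0)

lemma dd_bar_eq_of_single_mem (hD : DerivationSumVanishes c μ u)
    (hΓ1 : ∀ p ∈ jSet ℓ 1 3 ∪ iSet ℓ 4 5, (Pi.single p (1 : F) : ℕ → F) ∈ Γ) {p : ℕ}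
    (hp : p ∈ iSet ℓ 1 6) (h : (Pi.single p 1 : ℕ → F) ∈ Γ) :
    dd F ℓ Γ j0 (bar ℓ p) u = evalSingle μ p • X F ℓ Γ j0 (-sgm F ℓ p) 0 := by
  have := hD.brk_X_eq_neg_smul h
  rw [brk_eq_of_dd_eq_ite hD.dd_zero_eq_zero hp (dd_X_single_eq_ite h), neg_inj,
    ← evalSingle_of_mem h] at this
  rw [eq_smul_X_of_X_mulA_mulA_X_eq (sgm_mem hΓ1 hp) h h this, sub_sub_cancel_left]

lemma dd_eq_of_single_bar_mem (hD : DerivationSumVanishes c μ u)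
    (hΓ1 : ∀ p ∈ jSet ℓ 1 3 ∪ iSet ℓ 4 5, (Pi.single p (1 : F) : ℕ → F) ∈ Γ) {p : ℕ}
    (hp : p ∈ iSet ℓ 1 6) (h : (Pi.single (bar ℓ p) 1 : ℕ → F) ∈ Γ) :
    dd F ℓ Γ j0 p u = -evalSingle μ (bar ℓ p) • X F ℓ Γ j0 (-sgm F ℓ p) 0 := by
  have := hD.brk_X_eq_neg_smul h
  rw [brk_eq_of_dd_eq_ite_bar hD.dd_zero_eq_zero hp (dd_X_single_eq_ite h), ← evalSingle_of_mem h,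
    ← neg_smul] at this
  rw [eq_smul_X_of_X_mulA_mulA_X_eq (sgm_mem hΓ1 hp) h h this, sub_sub_cancel_left]

lemma dd_eq_zero_of_mem_I46 (hD : DerivationSumVanishes c μ u)
    (hΓ1 : ∀ p ∈ jSet ℓ 1 3 ∪ iSet ℓ 4 5, (Pi.single p (1 : F) : ℕ → F) ∈ Γ)
    {p : ℕ} (hp : p ∈ iSet ℓ 4 6) :
    dd F ℓ Γ j0 p u = 0 := by
  have hι := iot_chain (ℓ := ℓ)
  rw [mem_iSet] at hp
  have hp16 : p ∈ iSet ℓ 1 6 := by rw [mem_iSet]; omega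
  have hq : (Pi.single (bar ℓ p) 1 : ℕ → ℕ) ∈ jIdx ℓ j0 := by
    rw [bar_of_le hp.2]
    exact single_mem_jIdx (by omega)
  have hqt : bar ℓ p ∉ tSet ℓ := by
    rw [bar_of_le hp.2, mem_tSet]
    omega
  have := hD.brk_X_single_eq_zero hq hqt
  rw [brk_eq_of_dd_eq_ite_bar hD.dd_zero_eq_zero hp16 (dd_X_single hq), mulA_one] at this
  exact eq_zero_of_X_mulA_eq_zero (sgm_mem hΓ1 hp16) this

lemma dd_bar_eq_zero_of_mem_I6 (hD : DerivationSumVanishes c μ u) {p : ℕ} (hp : p ∈ iSet ℓ 6 6) :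
    dd F ℓ Γ j0 (bar ℓ p) u = 0 := by
  have hι := iot_chain (ℓ := ℓ)
  have hp16 : p ∈ iSet ℓ 1 6 := by rw [mem_iSet] at hp ⊢; omega
  rw [mem_iSet] at hp
  have hq : (Pi.single p 1 : ℕ → ℕ) ∈ jIdx ℓ j0 := single_mem_jIdx (by omega)
  have hqt : p ∉ tSet ℓ := by rw [mem_tSet]; omega
  have := hD.brk_X_single_eq_zero hq hqt
  rwa [brk_eq_of_dd_eq_ite hD.dd_zero_eq_zero hp16 (dd_X_single hq), mulA_one,
    sgm_of_mem_I6 (mem_iSet.2 hp), one_mulA, neg_eq_zero] at this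

lemma dd_eq_ite (hD : DerivationSumVanishes c μ u)
    (hΓ1 : ∀ p ∈ jSet ℓ 1 3 ∪ iSet ℓ 4 5, (Pi.single p (1 : F) : ℕ → F) ∈ Γ)
    (hμ : μ ∈ homPrime F ℓ Γ) {p : ℕ} (hp : p ∈ iSet ℓ 1 6) :
    dd F ℓ Γ j0 p u = (if p ∈ iSet ℓ 1 3 then evalSingle μ p • X F ℓ Γ j0 (-sgm F ℓ p) 0 else 0) ∧
    dd F ℓ Γ j0 (bar ℓ p) u =
      (if p ∈ iSet ℓ 1 3 then evalSingle μ p • X F ℓ Γ j0 (-sgm F ℓ p) 0 else 0) := by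
  have hι := iot_chain (ℓ := ℓ)
  rcases mem_iSet_one_six hp with h13 | h45 | h6
  · have h : (Pi.single p 1 : ℕ → F) ∈ Γ := hΓ1 _ (by simp [jSet, h13])
    have h' : (Pi.single (bar ℓ p) 1 : ℕ → F) ∈ Γ :=
      hΓ1 _ (Finset.mem_union_left _ (Finset.mem_union_right _ (Finset.mem_image_of_mem _ h13)))
    rw [if_pos h13, hD.dd_bar_eq_of_single_mem hΓ1 hp h, hD.dd_eq_of_single_bar_mem hΓ1 hp h',
      evalSingle_bar_of_mem_homPrime hμ h13 h h', neg_neg]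
    exact ⟨rfl, rfl⟩
  · have h13 : p ∉ iSet ℓ 1 3 := by rw [mem_iSet] at h45 ⊢; omega
    have h : (Pi.single p 1 : ℕ → F) ∈ Γ := hΓ1 _ (Finset.mem_union_right _ h45)
    have hσ : (⟨Pi.single p 1, h⟩ : ↥Γ) = -⟨sgm F ℓ p, sgm_mem hΓ1 hp⟩ :=
      Subtype.ext (by simp [sgm_of_mem_I45 h45])
    have h15 : p ∈ iSet ℓ 1 5 := by rw [mem_iSet] at h45 ⊢; omega
    rw [if_neg h13, hD.dd_bar_eq_of_single_mem hΓ1 hp h, evalSingle_of_mem h, hσ, map_neg,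
      hμ p h15 (sgm_mem hΓ1 hp), neg_zero, zero_smul,
      hD.dd_eq_zero_of_mem_I46 hΓ1 (by rw [mem_iSet] at h45 ⊢; omega)]
    exact ⟨rfl, rfl⟩
  · have h13 : p ∉ iSet ℓ 1 3 := by rw [mem_iSet] at h6 ⊢; omega
    rw [if_neg h13, hD.dd_bar_eq_zero_of_mem_I6 h6,
      hD.dd_eq_zero_of_mem_I46 hΓ1 (by rw [mem_iSet] at h6 ⊢; omega)]
    exact ⟨rfl, rfl⟩

lemma two_smul_sub_Dop_eq (hD : DerivationSumVanishes c μ u)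
    (hΓ0 : (∃ α ∈ Γ, α 0 ≠ 0) → (Pi.single 0 (1 : F) : ℕ → F) ∈ Γ)
    (hJ0 : j0 = false → ∃ α ∈ Γ, α 0 ≠ 0) :
    (2 : F) • u - Dop F ℓ Γ j0 u = coeffZero j0 μ • X F ℓ Γ j0 0 0 := by
  -- `t₀ ∈ 𝒥` only when `𝒥₀ = ℕ`; otherwise `x^{1_{[0]}}` is available to test against
  cases j0 with
  | false =>
    have h := hΓ0 (hJ0 rfl)
    have := hD.brk_X_eq_neg_smul h
    rw [brk_eq_of_dd_eq_ite_zero hD.dd_zero_eq_zero (dd_X_single_eq_ite h), mulA_comm,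
      ← neg_smul] at this
    rw [eq_X_neg_mulA_of_X_mulA_eq h this, mulA_smul,
      mulA_X_X (Γ.neg_mem h) zero_mem_jIdx h zero_mem_jIdx, neg_add_cancel, add_zero, coeffZero,
      evalSingle_of_mem h]
    rfl
  | true =>
    have := hD.brk_X_single_eq_zero single_zero_mem_jIdx (by rw [mem_tSet]; omega)
    rw [brk_eq_of_dd_eq_ite_zero hD.dd_zero_eq_zero (dd_X_single single_zero_mem_jIdx),
      mulA_one] at this
    rw [this, coeffZero, if_pos rfl, zero_smul]

lemma eq_adPart (hD : DerivationSumVanishes c μ u)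
    (hΓ1 : ∀ p ∈ jSet ℓ 1 3 ∪ iSet ℓ 4 5, (Pi.single p (1 : F) : ℕ → F) ∈ Γ)
    (hΓ3 : ∀ α ∈ Γ, ∀ p, 2 * iot ℓ 6 < p → α p = 0)
    (hΓ0 : (∃ α ∈ Γ, α 0 ≠ 0) → (Pi.single 0 (1 : F) : ℕ → F) ∈ Γ)
    (hJ0 : j0 = false → ∃ α ∈ Γ, α 0 ≠ 0) (hμ : μ ∈ homPrime F ℓ Γ) :
    u = adPart ℓ j0 μ := by
  have hι := iot_chain (ℓ := ℓ)
  have hdd : ∀ q ≤ 2 * iot ℓ 6, dd F ℓ Γ j0 q (u - adPart ℓ j0 μ) = 0 := by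
    intro q hq
    rw [dd_sub, sub_eq_zero]
    rcases Nat.eq_zero_or_pos q with rfl | hq0
    · rw [hD.dd_zero_eq_zero, dd_adPart hΓ1 μ fun r hr => neg_sgm_apply_of_le hr (Nat.zero_le _),
        if_neg (by rw [mem_iSet]; omega)]
    by_cases hq6 : q ≤ iot ℓ 6
    · have hp : q ∈ iSet ℓ 1 6 := by rw [mem_iSet]; omega
      rw [(hD.dd_eq_ite hΓ1 hμ hp).1, dd_adPart hΓ1 μ fun r hr => neg_sgm_apply_of_le hr hq6]
    · have hp : q - iot ℓ 6 ∈ iSet ℓ 1 6 := by rw [mem_iSet]; omega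
      have hbar : bar ℓ (q - iot ℓ 6) = q := by rw [bar_of_le (by omega)]; omega
      rw [← hbar, (hD.dd_eq_ite hΓ1 hμ hp).2, dd_adPart hΓ1 μ fun r hr => neg_sgm_apply_bar hr hp]
  obtain ⟨r, hr⟩ := exists_eq_smul_one_of_dd_eq_zero hΓ3 hdd
  have h2 : (2 : F) • (u - adPart ℓ j0 μ) - Dop F ℓ Γ j0 (u - adPart ℓ j0 μ) = 0 := by
    rw [smul_sub, Dop_sub, sub_sub_sub_comm, hD.two_smul_sub_Dop_eq hΓ0 hJ0,
      two_smul_sub_Dop_adPart hΓ1, sub_self]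
  rw [hr, isLinearMap_Dop.map_smul, Dop_one, smul_zero, sub_zero, smul_smul,
    smul_X_eq_zero_iff Γ.zero_mem zero_mem_jIdx] at h2
  rw [← sub_eq_zero, hr, show r = 0 by simpa using h2, zero_smul]

lemma brk_X_eq_sum_smul (hD : DerivationSumVanishes c μ u)
    (hΓ1 : ∀ p ∈ jSet ℓ 1 3 ∪ iSet ℓ 4 5, (Pi.single p (1 : F) : ℕ → F) ∈ Γ)
    (hΓ0 : (∃ α ∈ Γ, α 0 ≠ 0) → (Pi.single 0 (1 : F) : ℕ → F) ∈ Γ)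
    (hJ0 : j0 = false → ∃ α ∈ Γ, α 0 ≠ 0) (hμ : μ ∈ homPrime F ℓ Γ) {γ : ℕ → F} (hγ : γ ∈ Γ) :
    brk F ℓ Γ j0 u (X F ℓ Γ j0 γ 0) =
      ((∑ p ∈ iSet ℓ 1 3, evalSingle μ p * (γ (bar ℓ p) - γ p)) + coeffZero j0 μ * γ 0) •
        X F ℓ Γ j0 γ 0 := by
  have hterm : ∀ p ∈ iSet ℓ 1 6,
      X F ℓ Γ j0 (sgm F ℓ p) 0 ⋆ (dd F ℓ Γ j0 p u ⋆ (γ (bar ℓ p) • X F ℓ Γ j0 γ 0) -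
        dd F ℓ Γ j0 (bar ℓ p) u ⋆ (γ p • X F ℓ Γ j0 γ 0)) =
      if p ∈ iSet ℓ 1 3 then (evalSingle μ p * (γ (bar ℓ p) - γ p)) • X F ℓ Γ j0 γ 0 else 0 := by
    intro p hp
    rw [(hD.dd_eq_ite hΓ1 hμ hp).1, (hD.dd_eq_ite hΓ1 hμ hp).2]
    split_ifs with h13
    · rw [← mulA_sub, ← sub_smul, smul_mulA, mulA_smul, mulA_smul, mulA_smul,
        mulA_X_X (neg_sgm_mem hΓ1 h13) zero_mem_jIdx hγ zero_mem_jIdx, add_zero,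
        mulA_X_X (sgm_mem hΓ1 hp) zero_mem_jIdx (Γ.add_mem (neg_sgm_mem hΓ1 h13) hγ) zero_mem_jIdx,
        add_neg_cancel_left, add_zero, smul_smul]
    · rw [zero_mulA, zero_mulA, sub_zero, mulA_zero]
  rw [brk_eq_of_dd_zero_eq_zero hD.dd_zero_eq_zero, dd_X_zero hγ, hD.two_smul_sub_Dop_eq hΓ0 hJ0,
    smul_mulA, mulA_smul, one_mulA, smul_smul]
  simp only [dd_X_zero hγ]
  rw [Finset.sum_congr rfl hterm, Finset.sum_ite_mem,
    Finset.inter_eq_right.2 (iSet_subset_iSet le_rfl (by norm_num)), ← Finset.sum_smul, add_smul]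

lemma mem_spanMu (hD : DerivationSumVanishes c μ u)
    (hΓ1 : ∀ p ∈ jSet ℓ 1 3 ∪ iSet ℓ 4 5, (Pi.single p (1 : F) : ℕ → F) ∈ Γ)
    (hΓ0 : (∃ α ∈ Γ, α 0 ≠ 0) → (Pi.single 0 (1 : F) : ℕ → F) ∈ Γ)
    (hJ0 : j0 = false → ∃ α ∈ Γ, α 0 ≠ 0) (hμ : μ ∈ homPrime F ℓ Γ) :
    μ ∈ spanMu F ℓ Γ j0 := by
  have hμ_eq : μ = -((∑ p ∈ iSet ℓ 1 3, evalSingle μ p • muP F ℓ Γ p) +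
      coeffZero j0 μ • muZero F Γ j0) := by
    ext g
    have h := hD.brk_X_eq_neg_smul g.2
    rw [hD.brk_X_eq_sum_smul hΓ1 hΓ0 hJ0 hμ g.2, ← neg_smul, smul_X_left_inj g.2 zero_mem_jIdx] at h
    cases j0 <;> simp [muP, muZero, coordHom, coeffZero] at h ⊢ <;> linear_combination h
  rw [hμ_eq]
  exact Submodule.neg_mem _ (Submodule.add_mem _
    (Submodule.sum_mem _ fun p hp => Submodule.smul_mem _ _
      (Submodule.subset_span (Set.mem_insert_of_mem _ ⟨p, hp, rfl⟩)))
    (Submodule.smul_mem _ _ (Submodule.subset_span (Set.mem_insert _ _))))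

end DerivationSumVanishes

end

theorem derivation_sum_is_direct_general
    {F : Type*} [Field F] [CharZero F] (ℓ : ℕ → ℕ) (Γ : AddSubgroup (ℕ → F)) (j0 : Bool)
    (hΓ1 : ∀ p ∈ jSet ℓ 1 3 ∪ iSet ℓ 4 5, (Pi.single p (1 : F) : ℕ → F) ∈ Γ)
    (hΓ3 : ∀ α ∈ Γ, ∀ p, 2 * iot ℓ 6 < p → α p = 0)
    (hΓ0 : (∃ α ∈ Γ, α 0 ≠ 0) → (Pi.single 0 (1 : F) : ℕ → F) ∈ Γ)
    (hJ0 : j0 = false → ∃ α ∈ Γ, α 0 ≠ 0)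
    -- `Hom*_ℤ(Γ,F)`: a fixed complement of `span{μ_p : p ∈ {0}∪I_{1,3}}` in `Hom'_ℤ(Γ,F)`
    (H : Submodule F (↥Γ →+ F)) (hH0 : H ≤ homPrime F ℓ Γ)
    (hH2 : H ⊓ spanMu F ℓ Γ j0 = ⊥)
    (c : ℕ → F) (μ : ↥Γ →+ F) (hμ : μ ∈ H) (u : CA F ℓ Γ j0)
    (hzero : ∀ v : CA F ℓ Γ j0,
      (∑ p ∈ barSet ℓ (iSet ℓ 2 2) ∪ jSet ℓ 3 3 ∪ iSet ℓ 5 5, c p • pt F ℓ Γ j0 p v) +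
        dmu F ℓ Γ j0 (⇑μ) v + brk F ℓ Γ j0 u v = 0) :
    (∀ p ∈ barSet ℓ (iSet ℓ 2 2) ∪ jSet ℓ 3 3 ∪ iSet ℓ 5 5, c p = 0) ∧ μ = 0 ∧ u = 0 := by
  have hD : DerivationSumVanishes c μ u := hzero
  have hμ' : μ ∈ homPrime F ℓ Γ := hH0 hμ
  have hμ0 : μ = 0 := by
    have hmem : μ ∈ H ⊓ spanMu F ℓ Γ j0 := ⟨hμ, hD.mem_spanMu hΓ1 hΓ0 hJ0 hμ'⟩
    rwa [hH2, Submodule.mem_bot] at hmem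
  have hu0 : u = 0 := by
    rw [hD.eq_adPart hΓ1 hΓ3 hΓ0 hJ0 hμ', hμ0, adPart_zero]
  subst hμ0 hu0
  exact ⟨fun p hp => hD.apply_eq_zero_of_mem_tSet hp, rfl, rfl⟩

/-- The sum on the right-hand side of Theorem 3.1 is direct: if
`Σ_{p∈Ī₂∪J₃∪I₅} c_p ∂_{t_p} + d_μ + ad u = 0` as an operator on `𝒦`, with
`μ ∈ Hom*_ℤ(Γ,F)`, then all `c_p = 0`, `μ = 0` and `u = 0`. -/
theorem derivation_sum_is_direct
    {F : Type*} [Field F] [CharZero F] (ℓ : ℕ → ℕ) (Γ : AddSubgroup (ℕ → F)) (j0 : Bool)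
    (hℓ : 0 < iot ℓ 6)
    (hΓ1 : ∀ p ∈ jSet ℓ 1 3 ∪ iSet ℓ 4 5, (Pi.single p (1 : F) : ℕ → F) ∈ Γ)
    (hΓ2 : ∀ α ∈ Γ, ∀ p ∈ iSet ℓ 6 6 ∪ barSet ℓ (iSet ℓ 4 6), α p = 0)
    (hΓ3 : ∀ α ∈ Γ, ∀ p, 2 * iot ℓ 6 < p → α p = 0)
    (hΓ0 : (∃ α ∈ Γ, α 0 ≠ 0) → (Pi.single 0 (1 : F) : ℕ → F) ∈ Γ)
    (hJ0 : j0 = false → ∃ α ∈ Γ, α 0 ≠ 0)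
    -- `Hom*_ℤ(Γ,F)`: a fixed complement of `span{μ_p : p ∈ {0}∪I_{1,3}}` in `Hom'_ℤ(Γ,F)`
    (H : Submodule F (↥Γ →+ F)) (hH0 : H ≤ homPrime F ℓ Γ)
    (hH1 : H ⊔ spanMu F ℓ Γ j0 = homPrime F ℓ Γ)
    (hH2 : H ⊓ spanMu F ℓ Γ j0 = ⊥)
    (c : ℕ → F) (μ : ↥Γ →+ F) (hμ : μ ∈ H) (u : CA F ℓ Γ j0)
    (hzero : ∀ v : CA F ℓ Γ j0,
      (∑ p ∈ barSet ℓ (iSet ℓ 2 2) ∪ jSet ℓ 3 3 ∪ iSet ℓ 5 5, c p • pt F ℓ Γ j0 p v) +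
        dmu F ℓ Γ j0 (⇑μ) v + brk F ℓ Γ j0 u v = 0) :
    (∀ p ∈ barSet ℓ (iSet ℓ 2 2) ∪ jSet ℓ 3 3 ∪ iSet ℓ 5 5, c p = 0) ∧ μ = 0 ∧ u = 0 :=
  derivation_sum_is_direct_general ℓ Γ j0 hΓ1 hΓ3 hΓ0 hJ0 H hH0 hH2 c μ hμ u hzero

end
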